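/- arXiv:1911.08629 — 3 statements merged into one kernel-verified Lean document; each statement's English description precedes it below -/
import Mathlib

section
/- For integers $n \ge 10$ and $k \ge 1$, the function $F_k(t) = \sum_{i=1}^{n-1}\big(\sum_{j=1}^{n-1} \frac{1}{t+\frac{j-i}{n^k}}\big)\chi_{(\frac{i}{n^k},\frac{i+1}{n^k}]}(t)$ on $(0,1)$ satisfies $\frac{1}{2} n \log n \le \|F_k\|_{1,\infty} \le n \log n$. -/
/-!
Write `N = n ^ k` and `g(u) = ∑_{j=1}^{n-1} 1 / (u + j)`, a decreasing function. On the block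
`(i/N, (i+1)/N]` the function `F_k` equals `N g(N t - i)`, so all `n - 1` blocks carry the same
profile. Hence `{F_k > N g(v)}` is made of the initial pieces of length `v / N` of the blocks and
has measure `(n - 1) v / N`: for `t = (n - 1) v / N` this gives `t F_k^*(t) ≤ (n - 1) v g(v) ≤
(n - 1) g(1)`, while `F_k^* ≥ N g(1)` on `(0, (n - 1)/N)` gives the reverse inequality as
`t → (n - 1)/N`. Thus `‖F_k‖_{1,∞} = (n - 1) g(1) = (n - 1)(H_n - 1)` exactly, and
`log (n + 1) ≤ H_n ≤ 1 + log n` yields both bounds.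
-/

open MeasureTheory Set

/-- The distribution function of `f` viewed as a function on `(0,1)`. -/
noncomputable def distrib (f : ℝ → ℝ) (s : ℝ) : ENNReal :=
  volume {x ∈ Set.Ioo (0 : ℝ) 1 | s < |f x|}

/-- The decreasing rearrangement `f*` of a function on `(0,1)`. -/
noncomputable def rearr (f : ℝ → ℝ) (t : ℝ) : ℝ :=
  sInf {s : ℝ | 0 < s ∧ distrib f s ≤ ENNReal.ofReal t}

/-- The weak-`L¹` quasi-norm `‖f‖_{1,∞} = sup_{t ∈ (0,1)} t f*(t)`. -/
noncomputable def wnorm (f : ℝ → ℝ) : ENNReal :=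
  ⨆ t ∈ Set.Ioo (0 : ℝ) 1, ENNReal.ofReal (t * rearr f t)

open Filter Topology Function

section Rearrangement

variable {f : ℝ → ℝ} {s t : ℝ}

lemma distrib_eq_zero_of_abs_le {M : ℝ} (hf : ∀ x, |f x| ≤ M) (hs : M ≤ s) :
    distrib f s = 0 :=
  measure_mono_null (fun x hx => ((hf x).trans hs |>.not_gt hx.2).elim) measure_empty

lemma distrib_eq_volume (hf : support f ⊆ Icc 0 1) (hs : 0 ≤ s) :
    distrib f s = volume {x | s < |f x|} := by
  have hsub : {x | s < |f x|} ⊆ Icc 0 1 := fun x hx => hf (abs_pos.1 (hs.trans_lt hx))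
  conv_rhs => rw [← inter_eq_right.2 hsub]
  exact measure_congr (Ioo_ae_eq_Icc.inter EventuallyEq.rfl)

lemma rearr_nonneg (f : ℝ → ℝ) (t : ℝ) : 0 ≤ rearr f t :=
  Real.sInf_nonneg fun _ hs => hs.1.le

lemma rearr_le (hs : 0 < s) (h : distrib f s ≤ ENNReal.ofReal t) : rearr f t ≤ s :=
  csInf_le ⟨0, fun _ hs => hs.1.le⟩ ⟨hs, h⟩

lemma rearr_eq_zero (h : ∀ s, 0 < s → distrib f s ≤ ENNReal.ofReal t) : rearr f t = 0 :=
  le_antisymm (le_of_forall_gt_imp_ge_of_dense fun s hs => rearr_le hs (h s hs))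
    (rearr_nonneg f t)

lemma le_rearr {M c : ℝ} (hf : ∀ x, |f x| ≤ M)
    (h : ∀ s, 0 < s → s < c → ENNReal.ofReal t < distrib f s) : c ≤ rearr f t := by
  have hne : max M 1 ∈ {s : ℝ | 0 < s ∧ distrib f s ≤ ENNReal.ofReal t} :=
    ⟨lt_max_of_lt_right one_pos,
      (distrib_eq_zero_of_abs_le hf (le_max_left M 1)).trans_le zero_le⟩
  exact le_csInf ⟨_, hne⟩ fun s ⟨hs, hd⟩ => not_lt.1 fun hsc => (h s hs hsc).not_ge hd

end Rearrangement

noncomputable def shiftedHarmonic (m : ℕ) (u : ℝ) : ℝ :=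
  ∑ j ∈ Finset.Icc 1 m, 1 / (u + j)

section ShiftedHarmonic

variable {m : ℕ} {u v : ℝ}

lemma shiftedHarmonic_nonneg (hu : 0 ≤ u) : 0 ≤ shiftedHarmonic m u :=
  Finset.sum_nonneg fun _ _ => by positivity

lemma shiftedHarmonic_pos (hm : 0 < m) (hu : 0 ≤ u) : 0 < shiftedHarmonic m u :=
  Finset.sum_pos (fun j hj => by
    have hj : (1 : ℝ) ≤ j := mod_cast (Finset.mem_Icc.1 hj).1
    positivity) (Finset.nonempty_Icc.2 hm)

lemma shiftedHarmonic_le_of_le (hu : 0 ≤ u) (huv : u ≤ v) :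
    shiftedHarmonic m v ≤ shiftedHarmonic m u := by
  refine Finset.sum_le_sum fun j hj => ?_
  have hj : (1 : ℝ) ≤ j := mod_cast (Finset.mem_Icc.1 hj).1
  exact one_div_le_one_div_of_le (by positivity) (by linarith)

lemma mul_shiftedHarmonic_le (hv0 : 0 ≤ v) (hv1 : v ≤ 1) :
    v * shiftedHarmonic m v ≤ shiftedHarmonic m 1 := by
  rw [shiftedHarmonic, Finset.mul_sum]
  refine Finset.sum_le_sum fun j hj => ?_
  have hj : (1 : ℝ) ≤ j := mod_cast (Finset.mem_Icc.1 hj).1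
  rw [mul_one_div, div_le_div_iff₀ (by positivity) (by positivity)]
  nlinarith

lemma shiftedHarmonic_one (m : ℕ) : shiftedHarmonic m 1 = harmonic (m + 1) - 1 := by
  induction m with
  | zero => simp [shiftedHarmonic]
  | succ m ih =>
    rw [shiftedHarmonic, Finset.sum_Icc_succ_top (by omega), ← shiftedHarmonic, ih,
      harmonic_succ (m + 1)]
    push_cast
    ring

end ShiftedHarmonic

lemma nine_div_four_le_log_ten : 9 / 4 ≤ Real.log 10 := by
  have h : Real.exp 9 ≤ 10 ^ 4 :=
    calc Real.exp 9 = Real.exp 1 ^ 9 := by rw [Real.exp_one_pow]; norm_num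
      _ ≤ 2.7182818286 ^ 9 := pow_le_pow_left₀ (Real.exp_pos 1).le Real.exp_one_lt_d9.le 9
      _ ≤ 10 ^ 4 := by norm_num
  have := Real.log_le_log (Real.exp_pos 9) h
  rw [Real.log_exp, Real.log_pow] at this
  push_cast at this
  linarith

lemma sub_one_mul_harmonic_sub_one_le {n : ℕ} (hn : 1 ≤ n) :
    ((n : ℝ) - 1) * (harmonic n - 1) ≤ n * Real.log n := by
  have hn : (1 : ℝ) ≤ n := mod_cast hn
  have hlog := Real.log_natCast_nonneg n
  have hH : (harmonic n : ℝ) - 1 ≤ Real.log n := by linarith [harmonic_le_one_add_log n]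
  nlinarith

lemma mul_log_div_two_le_sub_one_mul_harmonic_sub_one {n : ℕ} (hn : 10 ≤ n) :
    n * Real.log n / 2 ≤ ((n : ℝ) - 1) * (harmonic n - 1) := by
  have hn : (10 : ℝ) ≤ n := mod_cast hn
  have hlog : 9 / 4 ≤ Real.log n :=
    nine_div_four_le_log_ten.trans (Real.log_le_log (by norm_num) hn)
  have hH : Real.log n ≤ harmonic n :=
    (Real.log_le_log (by positivity) (by push_cast; linarith)).trans (log_add_one_le_harmonic n)
  nlinarith [mul_le_mul_of_nonneg_left hH (by linarith : (0 : ℝ) ≤ n - 1),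
    mul_le_mul_of_nonneg_left hlog (by linarith : (0 : ℝ) ≤ n - 2)]

lemma mul_sub_mem_Ioc {N a w x : ℝ} (hN : 0 < N) (hx : x ∈ Ioc (a / N) ((a + w) / N)) :
    N * x - a ∈ Ioc 0 w :=
  ⟨by linarith [(div_lt_iff₀' hN).1 hx.1], by linarith [(le_div_iff₀' hN).1 hx.2]⟩

lemma pairwise_disjoint_Ioc_div {N v : ℝ} (hN : 0 < N) (hv : v ≤ 1) :
    Pairwise (Disjoint on fun i : ℕ => Ioc ((i : ℝ) / N) ((i + v) / N)) := by
  refine (pairwise_disjoint_on _).2 fun i j hij => Ioc_disjoint_Ioc_of_le ?_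
  have : (i : ℝ) + 1 ≤ j := mod_cast hij
  gcongr
  linarith

lemma volume_biUnion_Ioc_div (S : Finset ℕ) {N v : ℝ} (hN : 0 < N) (hv : v ≤ 1) :
    volume (⋃ i ∈ S, Ioc ((i : ℝ) / N) ((i + v) / N)) = S.card * ENNReal.ofReal (v / N) := by
  rw [measure_biUnion_finset ((pairwise_disjoint_Ioc_div hN hv).set_pairwise _)
    (fun _ _ => measurableSet_Ioc), ← nsmul_eq_mul, ← Finset.sum_const]
  refine Finset.sum_congr rfl fun i _ => ?_
  rw [Real.volume_Ioc]
  congr 1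
  ring

/-- The function `F_k` of the statement, with `m = n - 1` and `N = n ^ k`. -/
noncomputable def blockKernel (m : ℕ) (N : ℝ) (t : ℝ) : ℝ :=
  ∑ i ∈ Finset.Icc 1 m, (Ioc ((i : ℝ) / N) (((i : ℝ) + 1) / N)).indicator
    (fun s => ∑ j ∈ Finset.Icc 1 m, 1 / (s + ((j : ℝ) - (i : ℝ)) / N)) t

section BlockKernel

variable {m : ℕ} {N : ℝ}

lemma support_blockKernel_subset :
    support (blockKernel m N) ⊆
      ⋃ i ∈ Finset.Icc 1 m, Ioc ((i : ℝ) / N) ((i + 1) / N) :=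
  (Finset.support_sum _ _).trans (iUnion₂_mono fun _ _ => support_indicator_subset)

lemma blockKernel_of_mem (hN : 0 < N) {i : ℕ} (hi : i ∈ Finset.Icc 1 m) {x : ℝ}
    (hx : x ∈ Ioc ((i : ℝ) / N) ((i + 1) / N)) :
    blockKernel m N x = N * shiftedHarmonic m (N * x - i) := by
  rw [blockKernel, Finset.sum_eq_single_of_mem i hi fun b _ hbi =>
      indicator_of_notMem ((pairwise_disjoint_Ioc_div hN le_rfl hbi.symm).notMem_of_mem_left hx) _,
    indicator_of_mem hx, shiftedHarmonic, Finset.mul_sum]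
  refine Finset.sum_congr rfl fun j _ => ?_
  rw [show x + ((j : ℝ) - i) / N = (N * x - i + j) / N by field_simp; ring, one_div_div,
    mul_one_div]

lemma blockKernel_eq_zero_or (hN : 0 < N) (x : ℝ) :
    blockKernel m N x = 0 ∨ ∃ i ∈ Finset.Icc 1 m, x ∈ Ioc ((i : ℝ) / N) ((i + 1) / N) ∧
      blockKernel m N x = N * shiftedHarmonic m (N * x - i) := by
  by_cases hx : x ∈ support (blockKernel m N)
  · obtain ⟨i, hi, hxi⟩ := mem_iUnion₂.1 (support_blockKernel_subset hx)
    exact Or.inr ⟨i, hi, hxi, blockKernel_of_mem hN hi hxi⟩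
  · exact Or.inl (notMem_support.1 hx)

lemma blockKernel_nonneg (hN : 0 < N) (x : ℝ) : 0 ≤ blockKernel m N x := by
  obtain h | ⟨i, -, hxi, h⟩ := blockKernel_eq_zero_or (m := m) hN x
  · exact h.ge
  · exact h ▸ mul_nonneg hN.le (shiftedHarmonic_nonneg (mul_sub_mem_Ioc hN hxi).1.le)

lemma abs_blockKernel_le (hN : 0 < N) (x : ℝ) :
    |blockKernel m N x| ≤ N * shiftedHarmonic m 0 := by
  rw [abs_of_nonneg (blockKernel_nonneg hN x)]
  obtain h | ⟨i, -, hxi, h⟩ := blockKernel_eq_zero_or (m := m) hN x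
  · exact h ▸ mul_nonneg hN.le (shiftedHarmonic_nonneg le_rfl)
  · exact h ▸ mul_le_mul_of_nonneg_left
      (shiftedHarmonic_le_of_le le_rfl (mul_sub_mem_Ioc hN hxi).1.le) hN.le

lemma setOf_lt_blockKernel_subset (hN : 0 < N) {v : ℝ} (hv : 0 ≤ v) :
    {x | N * shiftedHarmonic m v < |blockKernel m N x|} ⊆
      ⋃ i ∈ Finset.Icc 1 m, Ioc ((i : ℝ) / N) ((i + v) / N) := by
  intro x (hx : N * shiftedHarmonic m v < _)
  rw [abs_of_nonneg (blockKernel_nonneg hN x)] at hx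
  obtain h | ⟨i, hi, hxi, h⟩ := blockKernel_eq_zero_or (m := m) hN x
  · exact absurd hx (h ▸ (mul_nonneg hN.le (shiftedHarmonic_nonneg hv)).not_gt)
  · rw [h, mul_lt_mul_iff_right₀ hN] at hx
    have huv : N * x - i < v := not_le.1 fun hvu => (shiftedHarmonic_le_of_le hv hvu).not_gt hx
    refine mem_iUnion₂.2 ⟨i, hi, hxi.1, (le_div_iff₀' hN).2 ?_⟩
    linarith

lemma biUnion_Ioc_subset_setOf_lt_blockKernel (hN : 0 < N) {s : ℝ}
    (hs : s < N * shiftedHarmonic m 1) :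
    ⋃ i ∈ Finset.Icc 1 m, Ioc ((i : ℝ) / N) ((i + 1) / N) ⊆
      {x | s < |blockKernel m N x|} := by
  intro x hx
  obtain ⟨i, hi, hxi⟩ := mem_iUnion₂.1 hx
  obtain ⟨hu0, hu1⟩ := mul_sub_mem_Ioc hN hxi
  calc s < N * shiftedHarmonic m 1 := hs
    _ ≤ N * shiftedHarmonic m (N * x - i) :=
      mul_le_mul_of_nonneg_left (shiftedHarmonic_le_of_le hu0.le hu1) hN.le
    _ = blockKernel m N x := (blockKernel_of_mem hN hi hxi).symm
    _ ≤ |blockKernel m N x| := le_abs_self _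

lemma support_blockKernel_subset_Icc (hN : 0 < N) (hmN : (m : ℝ) + 1 ≤ N) :
    support (blockKernel m N) ⊆ Icc 0 1 := by
  refine support_blockKernel_subset.trans (iUnion₂_subset fun i hi => ?_)
  have hi : (i : ℝ) ≤ m := mod_cast (Finset.mem_Icc.1 hi).2
  refine Ioc_subset_Icc_self.trans (Icc_subset_Icc (by positivity) ?_)
  rw [div_le_one hN]
  linarith

lemma volume_biUnion_Icc_Ioc_div (hN : 0 < N) {v : ℝ} (hv1 : v ≤ 1) :
    volume (⋃ i ∈ Finset.Icc 1 m, Ioc ((i : ℝ) / N) ((i + v) / N)) =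
      ENNReal.ofReal (m * v / N) := by
  rw [volume_biUnion_Ioc_div _ hN hv1, Nat.card_Icc, Nat.add_sub_cancel,
    ← ENNReal.ofReal_natCast, ← ENNReal.ofReal_mul (Nat.cast_nonneg _), mul_div_assoc]

lemma distrib_blockKernel_le (hN : 0 < N) {v : ℝ} (hv0 : 0 ≤ v) (hv1 : v ≤ 1) :
    distrib (blockKernel m N) (N * shiftedHarmonic m v) ≤ ENNReal.ofReal (m * v / N) :=
  calc _ ≤ volume {x | N * shiftedHarmonic m v < |blockKernel m N x|} :=
        measure_mono fun _ hx => hx.2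
    _ ≤ _ := measure_mono (setOf_lt_blockKernel_subset hN hv0)
    _ = _ := volume_biUnion_Icc_Ioc_div hN hv1

lemma distrib_blockKernel_le_of_pos (hN : 0 < N) {s : ℝ} (hs : 0 < s) :
    distrib (blockKernel m N) s ≤ ENNReal.ofReal (m / N) :=
  calc _ ≤ volume (⋃ i ∈ Finset.Icc 1 m, Ioc ((i : ℝ) / N) ((i + 1) / N)) :=
        measure_mono fun _ hx => support_blockKernel_subset (abs_pos.1 (hs.trans hx.2))
    _ = _ := by rw [volume_biUnion_Icc_Ioc_div hN le_rfl, mul_one]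

lemma ofReal_le_distrib_blockKernel (hN : 0 < N) (hmN : (m : ℝ) + 1 ≤ N) {s : ℝ}
    (hs0 : 0 ≤ s) (hs : s < N * shiftedHarmonic m 1) :
    ENNReal.ofReal (m / N) ≤ distrib (blockKernel m N) s := by
  rw [distrib_eq_volume (support_blockKernel_subset_Icc hN hmN) hs0]
  calc _ = volume (⋃ i ∈ Finset.Icc 1 m, Ioc ((i : ℝ) / N) ((i + 1) / N)) := by
        rw [volume_biUnion_Icc_Ioc_div hN le_rfl, mul_one]
    _ ≤ _ := measure_mono (biUnion_Ioc_subset_setOf_lt_blockKernel hN hs)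

lemma le_rearr_blockKernel (hN : 0 < N) (hmN : (m : ℝ) + 1 ≤ N) {t : ℝ} (ht0 : 0 ≤ t)
    (ht : t < m / N) : N * shiftedHarmonic m 1 ≤ rearr (blockKernel m N) t :=
  le_rearr (abs_blockKernel_le hN) fun _ hs hsc =>
    ((ENNReal.ofReal_lt_ofReal_iff_of_nonneg ht0).2 ht).trans_le
      (ofReal_le_distrib_blockKernel hN hmN hs.le hsc)

lemma mul_rearr_blockKernel_le (hN : 0 < N) {t : ℝ} (ht : 0 < t) :
    t * rearr (blockKernel m N) t ≤ m * shiftedHarmonic m 1 := by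
  rcases lt_or_ge t (m / N) with htm | htm
  · have hm : (0 : ℝ) < m := by
      by_contra! h
      exact (ht.trans htm).not_ge (div_nonpos_of_nonpos_of_nonneg h hN.le)
    set v := t * N / m with hv
    have hv0 : 0 < v := by positivity
    have hv1 : v ≤ 1 := (div_le_one hm).2 ((lt_div_iff₀ hN).1 htm).le
    have htv : t = m * v / N := by rw [hv]; field_simp
    have hpos : 0 < N * shiftedHarmonic m v :=
      mul_pos hN (shiftedHarmonic_pos (mod_cast hm) hv0.le)
    calc t * rearr (blockKernel m N) t ≤ t * (N * shiftedHarmonic m v) :=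
          mul_le_mul_of_nonneg_left
            (rearr_le hpos (htv ▸ distrib_blockKernel_le hN hv0.le hv1)) ht.le
      _ = m * (v * shiftedHarmonic m v) := by rw [htv]; field_simp
      _ ≤ m * shiftedHarmonic m 1 :=
        mul_le_mul_of_nonneg_left (mul_shiftedHarmonic_le hv0.le hv1) hm.le
  · rw [rearr_eq_zero fun s hs =>
      (distrib_blockKernel_le_of_pos hN hs).trans (ENNReal.ofReal_le_ofReal htm), mul_zero]
    exact mul_nonneg (Nat.cast_nonneg _) (shiftedHarmonic_nonneg zero_le_one)

theorem wnorm_blockKernel (hmN : (m : ℝ) + 1 ≤ N) :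
    wnorm (blockKernel m N) = ENNReal.ofReal (m * shiftedHarmonic m 1) := by
  have hN : 0 < N := by linarith [(Nat.cast_nonneg m : (0 : ℝ) ≤ m)]
  refine le_antisymm (iSup₂_le fun t ht =>
    ENNReal.ofReal_le_ofReal (mul_rearr_blockKernel_le hN ht.1)) ?_
  rcases Nat.eq_zero_or_pos m with rfl | hm
  · simp
  have hmN' : (m : ℝ) / N < 1 := by rw [div_lt_one hN]; linarith
  have hlim : Tendsto (fun t => ENNReal.ofReal (t * (N * shiftedHarmonic m 1)))
      (𝓝[<] ((m : ℝ) / N)) (𝓝 (ENNReal.ofReal (m * shiftedHarmonic m 1))) := by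
    have hcont : Continuous fun t : ℝ => ENNReal.ofReal (t * (N * shiftedHarmonic m 1)) :=
      ENNReal.continuous_ofReal.comp (continuous_mul_const _)
    convert (hcont.tendsto _).mono_left nhdsWithin_le_nhds using 3
    field_simp
  refine le_of_tendsto hlim (eventually_of_mem (Ioo_mem_nhdsLT (by positivity)) fun t ht => ?_)
  refine le_trans ?_ (le_iSup₂ (f := fun t _ => ENNReal.ofReal (t * rearr (blockKernel m N) t))
    t ⟨ht.1, ht.2.trans hmN'⟩)
  exact ENNReal.ofReal_le_ofReal
    (mul_le_mul_of_nonneg_left (le_rearr_blockKernel hN hmN ht.1.le ht.2) ht.1.le)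

end BlockKernel

theorem stmt1 (n k : ℕ) (hn : 10 ≤ n) (hk : 1 ≤ k)
    (F : ℝ → ℝ)
    (hF : ∀ t : ℝ, F t = ∑ i ∈ Finset.Icc 1 (n - 1),
      (Set.Ioc ((i : ℝ) / n ^ k) (((i : ℝ) + 1) / n ^ k)).indicator
        (fun s => ∑ j ∈ Finset.Icc 1 (n - 1), 1 / (s + ((j : ℝ) - (i : ℝ)) / n ^ k)) t) :
    ENNReal.ofReal ((n : ℝ) * Real.log n / 2) ≤ wnorm F ∧
      wnorm F ≤ ENNReal.ofReal ((n : ℝ) * Real.log n) := by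
  have hF : F = blockKernel (n - 1) ((n : ℝ) ^ k) := funext hF
  have hnN : ((n - 1 : ℕ) : ℝ) + 1 ≤ (n : ℝ) ^ k := by
    rw [Nat.cast_pred (by omega), sub_add_cancel]
    exact le_self_pow₀ (by norm_cast; omega) (by omega)
  have hH : ((n - 1 : ℕ) : ℝ) * shiftedHarmonic (n - 1) 1 = (n - 1) * (harmonic n - 1) := by
    rw [shiftedHarmonic_one, Nat.sub_add_cancel (by omega), Nat.cast_pred (by omega)]
  rw [hF, wnorm_blockKernel hnN, hH]
  exact ⟨ENNReal.ofReal_le_ofReal (mul_log_div_two_le_sub_one_mul_harmonic_sub_one hn),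
    ENNReal.ofReal_le_ofReal (sub_one_mul_harmonic_sub_one_le (by omega))⟩
end

section
/- For $n \ge 2$, $k \ge 1$, and $1 \le i \le n-1$, the function $f_{ki}(t) = \frac{1}{t+\frac{1}{n^{k-1}}-\frac{i}{n^k}}\chi_{(\frac{1}{n^k},\frac{i}{n^k}]}(t) + \frac{1}{t-\frac{i-1}{n^k}}\chi_{(\frac{i}{n^k},\frac{1}{n^{k-1}}]}(t)$ on $(0,1)$ satisfies $\|f_{ki}\|_{1,\infty} \le 1$. -/
open MeasureTheory Set

/-!
Write `a = n⁻ᵏ`, `b = i n⁻ᵏ`, `c = n¹⁻ᵏ`, so that `a + b ≤ c`. Both pieces of `f` are translates of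
`x ↦ 1 / x`: on `(a, b]` the denominator runs through `(a + c - b, c]` and on `(b, c]` through
`(a, a + c - b]`, so together they fill `(a, c]` without overlap. Hence `|f| > 1 / t` on a set of
measure at most `t - a ≤ t`, i.e. `f* (t) ≤ 1 / t`.
-/

lemma distrib_le_volume (f : ℝ → ℝ) (s : ℝ) : distrib f s ≤ volume {x | s < |f x|} :=
  measure_mono fun _ hx => hx.2

lemma rearr_le_of_distrib_le {f : ℝ → ℝ} {s t : ℝ} (hs : 0 < s) (h : distrib f s ≤ ENNReal.ofReal t) :
    rearr f t ≤ s :=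
  csInf_le ⟨0, fun _ hx => hx.1.le⟩ ⟨hs, h⟩

lemma wnorm_le_of_distrib_le {f : ℝ → ℝ} {C : ℝ} (hC : 0 < C)
    (h : ∀ t ∈ Ioo (0 : ℝ) 1, distrib f (C / t) ≤ ENNReal.ofReal t) :
    wnorm f ≤ ENNReal.ofReal C := by
  refine iSup₂_le fun t ht => ENNReal.ofReal_le_ofReal ?_
  calc t * rearr f t ≤ t * (C / t) :=
        mul_le_mul_of_nonneg_left (rearr_le_of_distrib_le (div_pos hC ht.1) (h t ht)) ht.1.le
    _ = C := mul_div_cancel₀ C ht.1.ne'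

lemma ENNReal.ofReal_add_ofReal_le {x y t : ℝ} (hx : x ≤ t) (hy : y ≤ t) (hxy : x + y ≤ t) :
    ENNReal.ofReal x + ENNReal.ofReal y ≤ ENNReal.ofReal t := by
  rcases le_total x 0 with hx0 | hx0 <;> rcases le_total y 0 with hy0 | hy0
  · simp [ENNReal.ofReal_of_nonpos hx0, ENNReal.ofReal_of_nonpos hy0]
  · rw [ENNReal.ofReal_of_nonpos hx0, zero_add]
    exact ENNReal.ofReal_le_ofReal hy
  · rw [ENNReal.ofReal_of_nonpos hy0, add_zero]
    exact ENNReal.ofReal_le_ofReal hx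
  · rw [← ENNReal.ofReal_add hx0 hy0]
    exact ENNReal.ofReal_le_ofReal hxy

lemma setOf_lt_abs_indicator_add_subset {α β : Type*} [AddGroup β] [Lattice β] {A B : Set α}
    (hAB : Disjoint A B) (g h : α → β) (s : β) :
    {x | s < |A.indicator g x + B.indicator h x|} ⊆
      {x | s < |A.indicator g x|} ∪ {x | s < |B.indicator h x|} := by
  intro x (hx : s < |A.indicator g x + B.indicator h x|)
  by_cases hA : x ∈ A
  · left
    rwa [Set.indicator_of_notMem (hAB.notMem_of_mem_left hA), add_zero] at hx
  · right
    rwa [Set.indicator_of_notMem hA, zero_add] at hx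

lemma setOf_one_div_lt_abs_indicator_subset {p q e t : ℝ} (he : e ≤ p) (ht : 0 < t) :
    {x | 1 / t < |(Ioc p q).indicator (fun x => 1 / (x - e)) x|} ⊆ Ioc p (min q (t + e)) := by
  intro x (hx : 1 / t < |(Ioc p q).indicator (fun x => 1 / (x - e)) x|)
  by_cases hxI : x ∈ Ioc p q
  · have hxe : 0 < x - e := by linarith [hxI.1]
    rw [Set.indicator_of_mem hxI, abs_of_pos (one_div_pos.2 hxe), one_div_lt_one_div ht hxe] at hx
    exact ⟨hxI.1, le_min hxI.2 (by linarith)⟩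
  · rw [Set.indicator_of_notMem hxI, abs_zero] at hx
    exact absurd hx (one_div_pos.2 ht).not_gt

lemma volume_one_div_lt_abs_indicator_le {p q e t : ℝ} (he : e ≤ p) (ht : 0 < t) :
    volume {x | 1 / t < |(Ioc p q).indicator (fun x => 1 / (x - e)) x|} ≤
      ENNReal.ofReal (min q (t + e) - p) :=
  (measure_mono (setOf_one_div_lt_abs_indicator_subset he ht)).trans_eq Real.volume_Ioc

lemma volume_one_div_lt_abs_le {a b c t : ℝ} (ha : 0 ≤ a) (habc : a + b ≤ c) (ht : 0 < t) :
    volume {x | 1 / t < |(Ioc a b).indicator (fun x => 1 / (x - (b - c))) x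
      + (Ioc b c).indicator (fun x => 1 / (x - (b - a))) x|} ≤ ENNReal.ofReal t :=
  calc _ ≤ volume ({x | 1 / t < |(Ioc a b).indicator (fun x => 1 / (x - (b - c))) x|}
          ∪ {x | 1 / t < |(Ioc b c).indicator (fun x => 1 / (x - (b - a))) x|}) :=
        measure_mono (setOf_lt_abs_indicator_add_subset (Ioc_disjoint_Ioc_of_le le_rfl) _ _ _)
    _ ≤ _ := measure_union_le _ _
    _ ≤ ENNReal.ofReal (min b (t + (b - c)) - a) + ENNReal.ofReal (min c (t + (b - a)) - b) :=
        add_le_add (volume_one_div_lt_abs_indicator_le (by linarith) ht)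
          (volume_one_div_lt_abs_indicator_le (by linarith) ht)
    _ ≤ ENNReal.ofReal t := by
        have h₁ := min_le_right b (t + (b - c))
        have h₂ := min_le_right c (t + (b - a))
        have h₃ := min_le_left c (t + (b - a))
        exact ENNReal.ofReal_add_ofReal_le (by linarith) (by linarith) (by linarith)

theorem stmt15_general (n k i : ℕ) (hn : 2 ≤ n) (hk : 1 ≤ k) (hi' : i ≤ n - 1)
    (f : ℝ → ℝ)
    (hf : ∀ t : ℝ,
      f t = (Set.Ioc (1 / (n : ℝ) ^ k) ((i : ℝ) / n ^ k)).indicator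
          (fun s => 1 / (s + 1 / (n : ℝ) ^ (k - 1) - (i : ℝ) / n ^ k)) t
        + (Set.Ioc ((i : ℝ) / n ^ k) (1 / (n : ℝ) ^ (k - 1))).indicator
          (fun s => 1 / (s - ((i : ℝ) - 1) / n ^ k)) t) :
    wnorm f ≤ 1 := by
  have hn₀ : (0 : ℝ) < n := by positivity
  have hpow : (n : ℝ) ^ k = n ^ (k - 1) * n := by rw [← pow_succ, Nat.sub_add_cancel hk]
  have hgap : 1 / (n : ℝ) ^ k + i / n ^ k ≤ 1 / n ^ (k - 1) := by
    have hi : (i : ℝ) + 1 ≤ n := by exact_mod_cast (by omega : i + 1 ≤ n)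
    rw [← add_div, hpow, div_le_div_iff₀ (by positivity) (by positivity)]
    nlinarith [pow_pos hn₀ (k - 1)]
  have hf' : f = fun x => (Ioc (1 / (n : ℝ) ^ k) (i / n ^ k)).indicator
        (fun x => 1 / (x - (i / n ^ k - 1 / n ^ (k - 1)))) x
      + (Ioc ((i : ℝ) / n ^ k) (1 / n ^ (k - 1))).indicator
        (fun x => 1 / (x - (i / n ^ k - 1 / n ^ k))) x := by
    funext x
    rw [hf x]
    congr 2 <;> funext s <;> ring
  rw [← ENNReal.ofReal_one]
  refine wnorm_le_of_distrib_le one_pos fun t ht => ?_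
  rw [hf']
  exact (distrib_le_volume _ _).trans (volume_one_div_lt_abs_le (by positivity) hgap ht.1)

theorem stmt15 (n k i : ℕ) (hn : 2 ≤ n) (hk : 1 ≤ k) (hi : 1 ≤ i) (hi' : i ≤ n - 1)
    (f : ℝ → ℝ)
    (hf : ∀ t : ℝ,
      f t = (Set.Ioc (1 / (n : ℝ) ^ k) ((i : ℝ) / n ^ k)).indicator
          (fun s => 1 / (s + 1 / (n : ℝ) ^ (k - 1) - (i : ℝ) / n ^ k)) t
        + (Set.Ioc ((i : ℝ) / n ^ k) (1 / (n : ℝ) ^ (k - 1))).indicator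
          (fun s => 1 / (s - ((i : ℝ) - 1) / n ^ k)) t) :
    wnorm f ≤ 1 :=
  stmt15_general n k i hn hk hi' f hf
end

section
/- For every sufficiently large $n \in \mathbb{N}$ there exist sequences $x_1, \dots, x_{n-1} \in \ell_{1,\infty}$ with $\|x_j\|_{1,\infty} \le 1$ such that for every choice of signs $\eta_j = \pm 1$, $\|\sum_{j=1}^{n-1} \eta_j x_j\|_{1,\infty} \ge \frac{1}{2} n \log n$. -/
/-!
Let `m = n - 1` and `B = ⌊log₂ m⌋`. For every sign pattern `ε ∈ {±1}^m` and every `b < B`, cut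
the `m` rows into dyadic blocks of length `2^b` and attach to the pair `(ε, b)` the scale
`s = B · code(ε) + b`, distinct for distinct pairs: each block gets `2^s` fresh coordinates on
which row `j` of the block takes the value `ε_j 2^{-(s+1)}`. A single row then has at most `2^s`
entries of size `2^{-(s+1)}` for each scale `s`, so it is dominated by a rearrangement of the
harmonic sequence and `‖x_j‖_{1,∞} ≤ 1`. Given signs `η`, on the coordinates of the pattern
`ε = η` the rows of a block add up coherently: all `∑_{b<B} ⌊m/2^b⌋ 2^s` of them carry the same
value `2^b 2^{-(s+1)} = 2^{-(B·code(η)+1)}`, whence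
`‖∑ η_j x_j‖_{1,∞} ≥ ½ ∑_{b<B} ⌊m/2^b⌋ 2^b ≥ ½ (B - 1)(m + 1) ≥ ½ n log n`.
-/

open Set

/-- The decreasing rearrangement of a sequence, `1`-indexed:
`srearr x n = x*(n) = inf {s > 0 : #{k : |x k| > s} ≤ n - 1}` for `n ≥ 1`. -/
noncomputable def srearr (x : ℕ → ℝ) (n : ℕ) : ℝ :=
  sInf {s : ℝ | 0 < s ∧ {k : ℕ | s < |x k|}.encard ≤ (n - 1 : ℕ)}

/-- The weak-`ℓ¹` quasi-norm `‖x‖_{1,∞} = sup_{n ≥ 1} n x*(n)`. -/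
noncomputable def swnorm (x : ℕ → ℝ) : ENNReal :=
  ⨆ n : ℕ, ENNReal.ofReal (((n : ℝ) + 1) * srearr x (n + 1))

open scoped Finset

theorem srearr_le_of_encard_le {x : ℕ → ℝ} {k : ℕ} {s : ℝ} (hs : 0 < s)
    (h : {i | s < |x i|}.encard ≤ (k - 1 : ℕ)) : srearr x k ≤ s :=
  csInf_le ⟨0, fun _ ht => ht.1.le⟩ ⟨hs, h⟩

theorem le_srearr_of_le_encard {x : ℕ → ℝ} {k : ℕ} {M lam : ℝ} (hM : ∀ i, |x i| ≤ M)
    (hk : 1 ≤ k) (h : (k : ℕ∞) ≤ {i | lam ≤ |x i|}.encard) : lam ≤ srearr x k := by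
  have hempty : {i | M + 1 < |x i|} = ∅ :=
    eq_empty_of_forall_notMem fun i (hi : M + 1 < |x i|) => by linarith [hM i]
  refine le_csInf ⟨M + 1, by linarith [abs_nonneg (x 0), hM 0], by simp [hempty]⟩ ?_
  rintro s ⟨-, hcount⟩
  by_contra! hlt
  have hle : (k : ℕ∞) ≤ (k - 1 : ℕ) :=
    h.trans <| (encard_le_encard fun i (hi : lam ≤ |x i|) => hlt.trans_le hi).trans hcount
  norm_cast at hle
  omega

theorem ofReal_mul_srearr_le_swnorm (x : ℕ → ℝ) {k : ℕ} (hk : 1 ≤ k) :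
    ENNReal.ofReal (k * srearr x k) ≤ swnorm x := by
  obtain ⟨k, rfl⟩ := Nat.exists_eq_add_of_le' hk
  unfold swnorm
  exact_mod_cast le_iSup (fun n : ℕ => ENNReal.ofReal ((n + 1) * srearr x (n + 1))) k

theorem swnorm_le_one_of_injOn {x : ℕ → ℝ} (ψ : ℕ → ℕ) (hψ : InjOn ψ (Function.support x))
    (hx : ∀ i, (ψ i + 1) * |x i| ≤ 1) : swnorm x ≤ 1 := by
  refine iSup_le fun k => ENNReal.ofReal_le_one.2 ?_
  set L := {i | ((k : ℝ) + 1)⁻¹ < |x i|}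
  have hmaps : MapsTo ψ L (Iio k) := by
    intro i (hi : ((k : ℝ) + 1)⁻¹ < |x i|)
    by_contra! hki
    rw [mem_Iio, not_lt] at hki
    have : ((k : ℝ) + 1) * |x i| ≤ 1 :=
      (mul_le_mul_of_nonneg_right (by exact_mod_cast Nat.succ_le_succ hki) (abs_nonneg _)).trans
        (hx i)
    rw [inv_lt_iff_one_lt_mul₀' (by positivity)] at hi
    linarith
  have hcount : L.encard ≤ (k + 1 - 1 : ℕ) := by
    have hLsupp : L ⊆ Function.support x := fun i (hi : _ < |x i|) =>
      abs_pos.1 (lt_trans (by positivity) hi)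
    calc L.encard = (ψ '' L).encard := ((hψ.mono hLsupp).encard_image).symm
      _ ≤ (Iio k).encard := encard_le_encard hmaps.image_subset
      _ = (k + 1 - 1 : ℕ) := by
        rw [← Finset.coe_range, encard_coe_eq_coe_finsetCard, Finset.card_range]; rfl
  calc ((k : ℝ) + 1) * srearr x (k + 1) ≤ ((k : ℝ) + 1) * ((k : ℝ) + 1)⁻¹ := by
        gcongr
        exact srearr_le_of_encard_le (by positivity) hcount
    _ = 1 := mul_inv_cancel₀ (by positivity)

theorem eq_and_eq_of_two_pow_add_eq {s t c d : ℕ} (hc : c < 2 ^ s) (hd : d < 2 ^ t)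
    (h : 2 ^ s + c = 2 ^ t + d) : s = t ∧ c = d := by
  have hlog : ∀ {s c : ℕ}, c < 2 ^ s → Nat.log 2 (2 ^ s + c) = s := fun hc =>
    Nat.log_eq_of_pow_le_of_lt_pow (by omega) (by rw [pow_succ]; omega)
  have hst : s = t := by rw [← hlog hc, ← hlog hd, h]
  subst hst
  exact ⟨rfl, by omega⟩

theorem eq_and_eq_of_mul_add_eq {B a b c d : ℕ} (hb : b < B) (hd : d < B)
    (h : B * a + b = B * c + d) : a = c ∧ b = d := by
  have hB : 0 < B := by omega
  have hdiv := congrArg (· / B) h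
  have hmod := congrArg (· % B) h
  simp only [Nat.mul_add_div hB, Nat.div_eq_of_lt hb, Nat.div_eq_of_lt hd, Nat.mul_add_mod,
    Nat.mod_eq_of_lt hb, Nat.mod_eq_of_lt hd, add_zero] at hdiv hmod
  exact ⟨hdiv, hmod⟩

theorem card_filter_div_eq {m k r : ℕ} (hk : 0 < k) (h : (r + 1) * k ≤ m) :
    #{j : Fin m | (j : ℕ) / k = r} = k := by
  rw [Finset.card_filter, Fin.sum_univ_eq_sum_range (fun j => if j / k = r then 1 else 0),
    ← Finset.card_filter]
  convert Nat.card_Ico (r * k) (r * k + k) using 2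
  · ext j
    simp only [Finset.mem_filter, Finset.mem_range, Finset.mem_Ico, Nat.div_eq_iff hk]
    have : (r + 1) * k = r * k + k := by ring
    omega
  · omega

theorem sub_one_mul_succ_le_sum_div_mul_pow {m B : ℕ} (h : 2 ^ B ≤ m) :
    (B - 1) * (m + 1) ≤ ∑ b ∈ Finset.range B, m / 2 ^ b * 2 ^ b := by
  have hterm : ∀ b ∈ Finset.range B, m + 1 ≤ m / 2 ^ b * 2 ^ b + 2 ^ b := fun b _ =>
    Nat.lt_div_mul_add (by positivity)
  have hsum := Finset.sum_le_sum hterm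
  rw [Finset.sum_const, Finset.card_range, smul_eq_mul, Finset.sum_add_distrib,
    Nat.geomSum_eq le_rfl] at hsum
  rcases B with _ | B
  · simp
  · simp only [add_tsub_cancel_right] at hsum ⊢
    have : (B + 1) * (m + 1) = B * (m + 1) + (m + 1) := by ring
    omega

theorem log_succ_le_natLog_sub_one {m : ℕ} (hm : 64 ≤ m) :
    Real.log (m + 1) ≤ Nat.log 2 m - 1 := by
  set B := Nat.log 2 m
  have hB : 6 ≤ B := Nat.le_log_of_pow_le (by norm_num) (by norm_num; omega)
  have hmB : (m : ℝ) + 1 ≤ 2 ^ (B + 1) := by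
    exact_mod_cast Nat.lt_pow_succ_log_self (by norm_num) m
  have hBr : (6 : ℝ) ≤ B := by exact_mod_cast hB
  calc Real.log (m + 1) ≤ Real.log (2 ^ (B + 1)) := Real.log_le_log (by positivity) hmB
    _ = (B + 1) * Real.log 2 := by rw [Real.log_pow]; push_cast; ring
    _ ≤ B - 1 := by nlinarith [Real.log_two_lt_d9]

namespace SignGadget

/-- `⟨ε, b, r, c⟩` is the `c`-th coordinate attached to the `r`-th dyadic block of rows of length
`2 ^ b`, for the sign pattern `ε`. -/
structure Point (m : ℕ) where
  pattern : Fin m → Bool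
  level : ℕ
  block : ℕ
  copy : ℕ

def Point.equivProd (m : ℕ) : Point m ≃ (Fin m → Bool) × ℕ × ℕ × ℕ where
  toFun q := (q.pattern, q.level, q.block, q.copy)
  invFun p := ⟨p.1, p.2.1, p.2.2.1, p.2.2.2⟩
  left_inv _ := rfl
  right_inv _ := rfl

noncomputable instance (m : ℕ) : Denumerable (Point m) :=
  letI := Encodable.ofEquiv _ (Point.equivProd m)
  haveI := (Point.equivProd m).infinite_iff.2 inferInstance
  Denumerable.ofEncodableOfInfinite _

variable {m : ℕ}

def scale (B : ℕ) (q : Point m) : ℕ := B * Encodable.encode q.pattern + q.level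

def IsValid (B : ℕ) (q : Point m) : Prop :=
  q.level < B ∧ (q.block + 1) * 2 ^ q.level ≤ m ∧ q.copy < 2 ^ scale B q

open scoped Classical in
noncomputable def entry (B : ℕ) (j : Fin m) (q : Point m) : ℝ :=
  if IsValid B q ∧ (j : ℕ) / 2 ^ q.level = q.block then
    (if q.pattern j then 1 else -1) / 2 ^ (scale B q + 1)
  else 0

noncomputable def row (m B : ℕ) (j : Fin m) (i : ℕ) : ℝ :=
  entry B j (Denumerable.ofNat (Point m) i)

def rank (B : ℕ) (q : Point m) : ℕ := 2 ^ scale B q + q.copy - 1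

theorem rank_add_one (B : ℕ) (q : Point m) : rank B q + 1 = 2 ^ scale B q + q.copy := by
  have := Nat.one_le_two_pow (n := scale B q)
  unfold rank
  omega

theorem rank_add_one_mul_abs_entry_le (B : ℕ) (j : Fin m) (q : Point m) :
    ((rank B q : ℝ) + 1) * |entry B j q| ≤ 1 := by
  by_cases hq : IsValid B q ∧ (j : ℕ) / 2 ^ q.level = q.block
  · have habs : |entry B j q| = 1 / 2 ^ (scale B q + 1) := by
      rw [entry, if_pos hq, abs_div, abs_of_pos (by positivity : (0 : ℝ) < 2 ^ (scale B q + 1))]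
      split_ifs <;> simp
    have hcopy : 2 ^ scale B q + q.copy ≤ 2 ^ (scale B q + 1) := by
      rw [pow_succ, mul_two]
      exact Nat.add_le_add_left hq.1.2.2.le _
    rw [habs, ← div_eq_mul_one_div, div_le_one (by positivity)]
    exact_mod_cast rank_add_one B q ▸ hcopy
  · simp [entry, hq]

theorem abs_entry_le_one (B : ℕ) (j : Fin m) (q : Point m) : |entry B j q| ≤ 1 :=
  le_trans (le_mul_of_one_le_left (abs_nonneg _) (by simp)) (rank_add_one_mul_abs_entry_le B j q)

/-- Along the support of a row, a point is recovered from its scale and copy index. -/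
theorem injOn_rank (B : ℕ) (j : Fin m) : InjOn (rank B) (Function.support (entry B j)) := by
  intro q hq q' hq' h
  have active : ∀ {q : Point m}, q ∈ Function.support (entry B j) →
      IsValid B q ∧ (j : ℕ) / 2 ^ q.level = q.block := fun hq => by
    by_contra hna
    exact hq (if_neg hna)
  obtain ⟨⟨hb, -, hc⟩, hr⟩ := active hq
  obtain ⟨⟨hb', -, hc'⟩, hr'⟩ := active hq'
  have h1 := congrArg (· + 1) h
  simp only [rank_add_one] at h1
  obtain ⟨hs, hcopy⟩ := eq_and_eq_of_two_pow_add_eq hc hc' h1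
  obtain ⟨hpat, hlev⟩ := eq_and_eq_of_mul_add_eq hb hb' hs
  cases q; cases q'
  simp_all [Encodable.encode_injective.eq_iff]

theorem swnorm_row_le_one (B : ℕ) (j : Fin m) : swnorm (row m B j) ≤ 1 := by
  refine swnorm_le_one_of_injOn (fun i => rank B (Denumerable.ofNat (Point m) i)) ?_
    fun i => rank_add_one_mul_abs_entry_le B j _
  exact (injOn_rank B j).comp (Function.LeftInverse.injective (f := Denumerable.ofNat (Point m))
    Denumerable.encode_ofNat).injOn fun _ hi => hi

theorem sum_mul_entry_of_isValid {B : ℕ} {η : Fin m → ℝ} {q : Point m} (hq : IsValid B q)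
    (hη : ∀ j, η j * (if q.pattern j then 1 else -1) = 1) :
    ∑ j, η j * entry B j q = 1 / 2 ^ (B * Encodable.encode q.pattern + 1) := by
  have hterm : ∀ j : Fin m, η j * entry B j q =
      if (j : ℕ) / 2 ^ q.level = q.block then 1 / 2 ^ (scale B q + 1) else 0 := by
    intro j
    by_cases hj : (j : ℕ) / 2 ^ q.level = q.block
    · rw [entry, if_pos ⟨hq, hj⟩, if_pos hj, mul_div_assoc', hη j]
    · rw [entry, if_neg (fun h => hj h.2), if_neg hj, mul_zero]
  rw [Finset.sum_congr rfl fun j _ => hterm j, Finset.sum_ite, Finset.sum_const_zero, add_zero,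
    Finset.sum_const, card_filter_div_eq (by positivity) hq.2.1, nsmul_eq_mul, scale]
  push_cast
  field_simp
  ring

theorem card_le_encard_isValid (B : ℕ) (ε : Fin m → Bool) :
    ((2 ^ (B * Encodable.encode ε) * ∑ b ∈ Finset.range B, m / 2 ^ b * 2 ^ b : ℕ) : ℕ∞) ≤
      {q : Point m | q.pattern = ε ∧ IsValid B q}.encard := by
  let F := (Finset.range B).sigma fun b =>
    Finset.range (m / 2 ^ b) ×ˢ Finset.range (2 ^ (B * Encodable.encode ε + b))
  let f : (Σ _ : ℕ, ℕ × ℕ) → Point m := fun p => ⟨ε, p.1, p.2.1, p.2.2⟩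
  have hf : f.Injective := by
    rintro ⟨b, r, c⟩ ⟨b', r', c'⟩ h
    simp only [f, Point.mk.injEq, true_and] at h
    obtain ⟨rfl, rfl, rfl⟩ := h
    rfl
  have hcard :
      #F = 2 ^ (B * Encodable.encode ε) * ∑ b ∈ Finset.range B, m / 2 ^ b * 2 ^ b := by
    simp only [F, Finset.card_sigma, Finset.card_product, Finset.card_range, Finset.mul_sum,
      pow_add]
    exact Finset.sum_congr rfl fun _ _ => by ring
  have hsub : (F.map ⟨f, hf⟩ : Set (Point m)) ⊆ {q | q.pattern = ε ∧ IsValid B q} := by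
    simp only [Finset.coe_map, Function.Embedding.coeFn_mk, image_subset_iff]
    rintro ⟨b, r, c⟩ hp
    simp only [F, Finset.coe_sigma, mem_sigma_iff, Finset.coe_range, mem_Iio, Finset.coe_product,
      mem_prod] at hp
    exact ⟨rfl, hp.1, (Nat.le_div_iff_mul_le (by positivity)).1 hp.2.1, hp.2.2⟩
  rw [← hcard, ← Finset.card_map ⟨f, hf⟩, ← encard_coe_eq_coe_finsetCard]
  exact encard_le_encard hsub

theorem le_swnorm_signedSum (B : ℕ) {η : Fin m → ℝ} (hη : ∀ j, η j = 1 ∨ η j = -1) :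
    ENNReal.ofReal ((∑ b ∈ Finset.range B, m / 2 ^ b * 2 ^ b : ℕ) / 2) ≤
      swnorm (fun i => ∑ j, η j * row m B j i) := by
  set S := ∑ b ∈ Finset.range B, m / 2 ^ b * 2 ^ b
  set y := fun i => ∑ j, η j * row m B j i
  rcases Nat.eq_zero_or_pos S with hS | hS
  · simp [hS]
  set ε : Fin m → Bool := fun j => decide (η j = 1)
  have hε : ∀ j, η j * (if ε j then 1 else -1) = 1 := fun j => by
    rcases hη j with h | h <;> norm_num [ε, h]
  set T := Encodable.encode ε
  set lam : ℝ := 1 / 2 ^ (B * T + 1)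
  have hy : ∀ q : Point m, q.pattern = ε → IsValid B q → y (Encodable.encode q) = lam := by
    intro q hpat hq
    simp only [y, row, Denumerable.ofNat_encode]
    rw [sum_mul_entry_of_isValid hq (hpat ▸ hε), hpat]
  have hcount : ((2 ^ (B * T) * S : ℕ) : ℕ∞) ≤ {i | lam ≤ |y i|}.encard := by
    refine (card_le_encard_isValid B ε).trans ?_
    rw [← Encodable.encode_injective.encard_image]
    refine encard_le_encard ?_
    rintro _ ⟨q, ⟨hpat, hq⟩, rfl⟩
    simp only [mem_ofPred_eq, hy q hpat hq, abs_of_pos (by positivity : (0 : ℝ) < lam), le_rfl]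
  have hbdd : ∀ i, |y i| ≤ m := fun i => by
    refine (Finset.abs_sum_le_sum_abs _ _).trans ?_
    have hj : ∀ j, |η j * row m B j i| ≤ 1 := fun j => by
      rw [abs_mul]
      rcases hη j with h | h <;> simpa [h, row] using abs_entry_le_one B j _
    simpa using Finset.sum_le_sum fun j (_ : j ∈ Finset.univ) => hj j
  calc ENNReal.ofReal (S / 2) = ENNReal.ofReal ((2 ^ (B * T) * S : ℕ) * lam) := by
        congr 1
        push_cast
        simp only [lam]
        field_simp
        ring
    _ ≤ ENNReal.ofReal ((2 ^ (B * T) * S : ℕ) * srearr y (2 ^ (B * T) * S)) := by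
        gcongr
        exact le_srearr_of_le_encard hbdd (Nat.one_le_iff_ne_zero.2 (by positivity)) hcount
    _ ≤ swnorm y := ofReal_mul_srearr_le_swnorm y (Nat.one_le_iff_ne_zero.2 (by positivity))

end SignGadget

theorem stmt16 : ∃ N : ℕ, ∀ n : ℕ, N ≤ n →
    ∃ x : Fin (n - 1) → ℕ → ℝ,
      (∀ j, swnorm (x j) ≤ 1) ∧
      ∀ η : Fin (n - 1) → ℝ, (∀ j, η j = 1 ∨ η j = -1) →
        ENNReal.ofReal ((n : ℝ) * Real.log n / 2) ≤
          swnorm (fun i => ∑ j, η j * x j i) := by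
  refine ⟨65, fun n hn => ⟨SignGadget.row (n - 1) (Nat.log 2 (n - 1)),
    SignGadget.swnorm_row_le_one _, fun η hη =>
      (ENNReal.ofReal_le_ofReal ?_).trans (SignGadget.le_swnorm_signedSum _ hη)⟩⟩
  obtain ⟨m, rfl⟩ : ∃ m, n = m + 1 := ⟨n - 1, by omega⟩
  simp only [add_tsub_cancel_right]
  set B := Nat.log 2 m
  have hB : 1 ≤ B := Nat.le_log_of_pow_le (by norm_num) (by omega)
  have hsum : ((B - 1 : ℕ) : ℝ) * (m + 1) ≤ ∑ b ∈ Finset.range B, m / 2 ^ b * 2 ^ b := by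
    exact_mod_cast sub_one_mul_succ_le_sum_div_mul_pow (Nat.pow_log_le_self 2 (by omega))
  have hlog := log_succ_le_natLog_sub_one (m := m) (by omega)
  push_cast [hB] at hsum ⊢
  gcongr
  nlinarith
end
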